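/- Let f : ℝⁿ → ℝ be C^1 near x̄ and suppose there exist positive constants c, δ and a set Σ ⊆ ℝⁿ such that f(x) − f(x̄) ≥ c · dist(x, Σ)^r for all ‖x − x̄‖ ≤ δ. If additionally g : ℝⁿ → ℝ is C^r near x̄ with all derivatives of orders 0 through r vanishing at every point of Σ near x̄, then x̄ is a local minimum of f + g. -/

import Mathlib

/-!
Near a point `y ∈ S`, where all derivatives of `g` of order `< r` vanish, a bound `ε` on the
`r`-th derivative gives `‖g x‖ ≤ ε · ‖x - y‖ ^ r` by applying the mean value theorem `r` times
along the segment `[y, x]`. Since the `r`-th derivative vanishes at `xbar ∈ S` and is continuous,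
`ε` can be taken to be `c / 2` on a small ball, so `|g x| ≤ (c / 2) · dist(x, S) ^ r` near `xbar`,
which the growth of `f` absorbs.
-/

open Filter Metric Set Topology

section TaylorVanishing

variable {E F : Type*} [NormedAddCommGroup E] [NormedSpace ℝ E]
  [NormedAddCommGroup F] [NormedSpace ℝ F]
  {g : E → F} {U : Set E} {r : ℕ} {y : E} {ε : ℝ}

theorem norm_iteratedFDeriv_le_mul_norm_sub_pow (hU : IsOpen U) (hUc : Convex ℝ U)
    (hg : ContDiffOn ℝ r g U) (hy : y ∈ U) (hvan : ∀ j < r, iteratedFDeriv ℝ j g y = 0)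
    (hbound : ∀ w ∈ U, ‖iteratedFDeriv ℝ r g w‖ ≤ ε) :
    ∀ k ≤ r, ∀ x ∈ U, ‖iteratedFDeriv ℝ (r - k) g x‖ ≤ ε * ‖x - y‖ ^ k := by
  have hε : 0 ≤ ε := (norm_nonneg _).trans (hbound y hy)
  intro k
  induction k with
  | zero => simpa using hbound
  | succ k ih =>
    intro hk x hx
    have hseg : segment ℝ y x ⊆ U := hUc.segment_subset hy hx
    have hdiff : ∀ w ∈ segment ℝ y x,
        DifferentiableAt ℝ (iteratedFDeriv ℝ (r - (k + 1)) g) w := fun w hw =>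
      (hg.contDiffAt (hU.mem_nhds (hseg hw))).differentiableAt_iteratedFDeriv
        (by exact_mod_cast (by omega : r - (k + 1) < r))
    have hderiv : ∀ w ∈ segment ℝ y x,
        ‖fderiv ℝ (iteratedFDeriv ℝ (r - (k + 1)) g) w‖ ≤ ε * ‖x - y‖ ^ k := by
      intro w hw
      rw [norm_fderiv_iteratedFDeriv, show r - (k + 1) + 1 = r - k by omega]
      calc ‖iteratedFDeriv ℝ (r - k) g w‖ ≤ ε * ‖w - y‖ ^ k := ih (by omega) w (hseg hw)
        _ ≤ ε * ‖x - y‖ ^ k := by gcongr; exact norm_sub_le_of_mem_segment hw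
    have hmvt := (convex_segment y x).norm_image_sub_le_of_norm_fderiv_le hdiff hderiv
      (left_mem_segment ℝ y x) (right_mem_segment ℝ y x)
    rwa [hvan _ (by omega), sub_zero, mul_assoc, ← pow_succ] at hmvt

theorem norm_le_mul_norm_sub_pow_of_iteratedFDeriv_eq_zero (hU : IsOpen U) (hUc : Convex ℝ U)
    (hg : ContDiffOn ℝ r g U) (hy : y ∈ U) (hvan : ∀ j < r, iteratedFDeriv ℝ j g y = 0)
    (hbound : ∀ w ∈ U, ‖iteratedFDeriv ℝ r g w‖ ≤ ε) {x : E} (hx : x ∈ U) :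
    ‖g x‖ ≤ ε * ‖x - y‖ ^ r := by
  have h := norm_iteratedFDeriv_le_mul_norm_sub_pow hU hUc hg hy hvan hbound r le_rfl x hx
  rwa [Nat.sub_self, norm_iteratedFDeriv_zero] at h

end TaylorVanishing

theorem le_mul_infDist_pow {X : Type*} [PseudoMetricSpace X] {S : Set X} {x : X} {a ε R : ℝ}
    {r : ℕ} (hε : 0 ≤ ε) (hS : S.Nonempty) (hR : infDist x S < R)
    (h : ∀ y ∈ S, dist x y < R → a ≤ ε * dist x y ^ r) :
    a ≤ ε * infDist x S ^ r := by
  have hlim : Tendsto (fun t : ℝ => ε * t ^ r) (𝓝[>] (infDist x S)) (𝓝 (ε * infDist x S ^ r)) :=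
    ((continuous_const.mul (continuous_pow r)).tendsto _).mono_left nhdsWithin_le_nhds
  refine ge_of_tendsto hlim ?_
  filter_upwards [Ioo_mem_nhdsGT hR] with t ht
  obtain ⟨y, hyS, hyt⟩ := (infDist_lt_iff hS).mp ht.1
  calc a ≤ ε * dist x y ^ r := h y hyS (hyt.trans ht.2)
    _ ≤ ε * t ^ r := by gcongr

theorem eventually_norm_le_mul_infDist_pow {E F : Type*} [NormedAddCommGroup E]
    [NormedSpace ℝ E] [NormedAddCommGroup F] [NormedSpace ℝ F] {g : E → F} {S W : Set E}
    {xbar : E} {r : ℕ} (hW : IsOpen W) (hxW : xbar ∈ W) (hxS : xbar ∈ S)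
    (hg : ContDiffOn ℝ r g W) (hvan : ∀ z ∈ S ∩ W, ∀ j ≤ r, iteratedFDeriv ℝ j g z = 0)
    {ε : ℝ} (hε : 0 < ε) :
    ∀ᶠ x in 𝓝 xbar, ‖g x‖ ≤ ε * infDist x S ^ r := by
  have hsmall : Tendsto (fun w => ‖iteratedFDeriv ℝ r g w‖) (𝓝 xbar) (𝓝 0) := by
    simpa [hvan xbar ⟨hxS, hxW⟩ r le_rfl] using
      ((hg.contDiffAt (hW.mem_nhds hxW)).continuousAt_iteratedFDeriv le_rfl).norm.tendsto
  obtain ⟨ρ, hρ, hball⟩ := eventually_nhds_iff_ball.mp <|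
    Filter.Eventually.and (hW.mem_nhds hxW) (hsmall.eventually (ge_mem_nhds hε))
  filter_upwards [ball_mem_nhds xbar (half_pos hρ)] with x hx
  refine le_mul_infDist_pow hε.le ⟨xbar, hxS⟩ ((infDist_le_dist_of_mem hxS).trans_lt hx) ?_
  intro y hyS hxy
  have hyρ : y ∈ ball xbar ρ := by
    rw [mem_ball] at hx ⊢
    linarith [dist_triangle_left y xbar x]
  rw [dist_eq_norm]
  exact norm_le_mul_norm_sub_pow_of_iteratedFDeriv_eq_zero isOpen_ball (convex_ball xbar ρ)
    (hg.mono fun w hw => (hball w hw).1) hyρ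
    (fun j hj => hvan y ⟨hyS, (hball y hyρ).1⟩ j hj.le) (fun w hw => (hball w hw).2)
    (ball_subset_ball (half_le_self hρ.le) hx)

theorem stmt_11_general {n : ℕ} (r : ℕ) (f : EuclideanSpace ℝ (Fin n) → ℝ)
    (xbar : EuclideanSpace ℝ (Fin n)) (S : Set (EuclideanSpace ℝ (Fin n)))
    (hxS : xbar ∈ S)
    (c δ : ℝ) (hc : 0 < c) (hδ : 0 < δ)
    (hgrow : ∀ x ∈ Metric.closedBall xbar δ,
      c * Metric.infDist x S ^ r ≤ f x - f xbar) :
    ∀ (g : EuclideanSpace ℝ (Fin n) → ℝ) (W : Set (EuclideanSpace ℝ (Fin n))),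
      IsOpen W → xbar ∈ W → ContDiffOn ℝ r g W →
      (∀ z ∈ S ∩ W, ∀ j ≤ r, iteratedFDeriv ℝ j g z = 0) →
      IsLocalMin (f + g) xbar := by
  intro g W hW hxW hg hvan
  have hg0 : g xbar = 0 := by
    simpa using congrArg norm (hvan xbar ⟨hxS, hxW⟩ 0 r.zero_le)
  filter_upwards [eventually_norm_le_mul_infDist_pow hW hxW hxS hg hvan (half_pos hc),
    closedBall_mem_nhds xbar hδ] with x hgx hx
  have hgrowx := hgrow x hx
  have hgrowth_nonneg : 0 ≤ c * infDist x S ^ r := mul_nonneg hc.le (pow_nonneg infDist_nonneg r)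
  rw [Real.norm_eq_abs] at hgx
  simp only [Pi.add_apply, hg0]
  linarith [neg_abs_le (g x)]

/-- (ii) ⇒ (i): the growth condition `f(x) - f(xbar) ≥ c·dist(x,S)^r` implies that `xbar`
remains a local minimum of `f + g` for every `C^r` perturbation `g` whose derivatives of
orders `0` through `r` vanish on `S` near `xbar`. -/
theorem stmt_11 {n : ℕ} (r : ℕ) (hr : 1 ≤ r) (f : EuclideanSpace ℝ (Fin n) → ℝ)
    (xbar : EuclideanSpace ℝ (Fin n)) (S V : Set (EuclideanSpace ℝ (Fin n)))
    (hV : IsOpen V) (hxV : xbar ∈ V) (hf : ContDiffOn ℝ 1 f V)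
    (hxS : xbar ∈ S)
    (c δ : ℝ) (hc : 0 < c) (hδ : 0 < δ)
    (hgrow : ∀ x ∈ Metric.closedBall xbar δ,
      c * Metric.infDist x S ^ r ≤ f x - f xbar) :
    ∀ (g : EuclideanSpace ℝ (Fin n) → ℝ) (W : Set (EuclideanSpace ℝ (Fin n))),
      IsOpen W → xbar ∈ W → ContDiffOn ℝ r g W →
      (∀ z ∈ S ∩ W, ∀ j ≤ r, iteratedFDeriv ℝ j g z = 0) →
      IsLocalMin (f + g) xbar :=
  stmt_11_general r f xbar S hxS c δ hc hδ hgrow
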